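/- arXiv:1803.04273 — 3 statements merged into one kernel-verified Lean document; each statement's English description precedes it below -/
import Mathlib

section
/- Let p : E → B be a map of topological spaces with the unique lifting property for maps from cubes: for every continuous Ψ : [0,1]^p → B and every e0 ∈ E with p(e0) = Ψ(0), there is a unique continuous U : [0,1]^p → E with U(0) = e0 and p ∘ U = Ψ. If in addition E is contractible and each fiber of p has exactly two points, then π_k(B, b0) = 0 for all k ≥ 2 and π_1(B, b0) has exactly 2 elements, for any b0 ∈ B with path-connected B. -/
/-!
Lifts of maps from cubes are unique once one value is fixed, so a lift of a map that is
constant on a path-connected set is constant there. For `k ≥ 2` the boundary of `I^k` is path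
connected, hence the lift of a `k`-loop of `B` is a `k`-loop of `E`; as `E` is contractible any
two of these are homotopic rel boundary, and projecting the homotopy shows `π_k(B) = 0`.
For `π₁`, a loop is sent to the endpoint of its lift: lifting a homotopy of loops (a map of the
square) shows this is well defined on `π₁(B, b₀)`, path-connectedness of `E` makes it onto the
fibre over `b₀`, and simple connectedness of `E` makes it injective.
-/

open unitInterval Set Topology Topology.Homotopy ContinuousMap

namespace Cube

variable {N : Type*}

noncomputable def dilate (t : I) (y : I^N) : I^N :=
  fun i => projIcc 0 1 zero_le_one ((1 + t) * (y i - 2⁻¹) + 2⁻¹)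

noncomputable def bump [Fintype N] (y : I^N) : I :=
  ∏ i, projIcc 0 1 zero_le_one (4 * min (y i : ℝ) (1 - y i))

theorem continuous_dilate : Continuous fun q : I × I^N => dilate q.1 q.2 := by
  unfold dilate; fun_prop

theorem continuous_bump [Fintype N] : Continuous (bump (N := N)) := by
  unfold bump; fun_prop

theorem dilate_zero (y : I^N) : dilate 0 y = y := by
  ext i; simp [dilate, projIcc_of_mem]

theorem dilate_mem_boundary (t : I) {y : I^N} (hy : y ∈ boundary N) :
    dilate t y ∈ boundary N := by
  obtain ⟨i, hi | hi⟩ := hy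
  · refine ⟨i, Or.inl (projIcc_of_le_left _ ?_)⟩
    simp only [hi, Icc.coe_zero]
    nlinarith [t.2.1]
  · refine ⟨i, Or.inr (projIcc_of_right_le _ ?_)⟩
    simp only [hi, Icc.coe_one]
    nlinarith [t.2.1]

theorem bump_eq_zero [Fintype N] {y : I^N} (hy : y ∈ boundary N) : bump y = 0 := by
  obtain ⟨i, hi⟩ := hy
  refine Finset.prod_eq_zero (Finset.mem_univ i) (projIcc_of_le_left _ ?_)
  rcases hi with hi | hi <;> simp [hi]

theorem dilate_one_mem_boundary [Fintype N] {y : I^N} (hy : bump y ≠ 1) :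
    dilate 1 y ∈ boundary N := by
  obtain ⟨i, -, hi⟩ := Finset.exists_ne_one_of_prod_ne_one hy
  have : 4 * min (y i : ℝ) (1 - y i) < 1 := by
    by_contra! h
    exact hi (projIcc_of_right_le _ h)
  refine ⟨i, ?_⟩
  rcases min_lt_iff.1 (by linarith : min (y i : ℝ) (1 - y i) < 4⁻¹) with h | h
  · exact Or.inl (projIcc_of_le_left _ (by push_cast; linarith))
  · exact Or.inr (projIcc_of_right_le _ (by push_cast; linarith))

theorem joinedIn_boundary_zero [DecidableEq N] [Nontrivial N] {y : I^N} (hy : y ∈ boundary N) :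
    JoinedIn (boundary N) y 0 := by
  obtain ⟨i, hi⟩ := hy
  obtain ⟨j, hj⟩ := exists_ne i
  let shrinkOthers : Path y (Function.update (0 : I^N) i (y i)) :=
    { toFun := fun t => Function.update (fun k => σ t * y k) i (y i)
      continuous_toFun := by fun_prop
      source' := by simp
      target' := by ext k; by_cases hk : k = i <;> simp [hk] }
  let shrinkLast : Path (Function.update (0 : I^N) i (y i)) 0 :=
    { toFun := fun t => Function.update (0 : I^N) i (σ t * y i)
      continuous_toFun := by fun_prop
      source' := by simp
      target' := by simp }
  refine JoinedIn.trans ⟨shrinkOthers, fun t => ⟨i, by simpa [shrinkOthers] using hi⟩⟩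
    ⟨shrinkLast, fun t => ⟨j, Or.inl (by simp [shrinkLast, hj])⟩⟩

end Cube

/-- `f ∘ dilate 1` equals `x` wherever `bump < 1`, and there the contraction only runs up to time
`bump`, so the end of the homotopy, `G (bump y, x)`, does not depend on `f`. -/
theorem GenLoop.homotopic_of_contractibleSpace {N X : Type*} [Fintype N] [TopologicalSpace X]
    [ContractibleSpace X] {x : X} (f g : Ω^ N X x) : GenLoop.Homotopic f g := by
  obtain ⟨c, ⟨G⟩⟩ := id_nullhomotopic X
  have := Cube.continuous_bump (N := N)
  let W : C(I^N, X) := ⟨fun y => G (Cube.bump y, x), by fun_prop⟩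
  suffices h : ∀ f : Ω^ N X x, f.1.HomotopicRel W (Cube.boundary N) from (h f).trans (h g).symm
  intro f
  refine ⟨{ toFun := fun q => G (q.1 * Cube.bump q.2, f (Cube.dilate q.1 q.2))
            continuous_toFun := ?_
            map_zero_left := fun y => by simp [Cube.dilate_zero]
            map_one_left := fun y => ?_
            prop' := fun t y hy => ?_ }⟩
  · have := Cube.continuous_dilate (N := N)
    fun_prop
  · by_cases hy : Cube.bump y = 1
    · simp [W, hy]
    · simp [W, GenLoop.boundary f _ (Cube.dilate_one_mem_boundary hy)]
  · simp [Cube.bump_eq_zero hy, GenLoop.boundary f _ (Cube.dilate_mem_boundary t hy),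
      GenLoop.boundary f y hy]

section

variable {E B : Type*} [TopologicalSpace E] [TopologicalSpace B]

def HasUniqueCubeLifting (p : E → B) : Prop :=
  ∀ (n : ℕ) (Ψ : C((Fin n → I), B)) (e₀ : E), p e₀ = Ψ (fun _ => 0) →
    ∃! U : C((Fin n → I), E), U (fun _ => 0) = e₀ ∧ ∀ x, p (U x) = Ψ x

namespace HasUniqueCubeLifting

variable {p : E → B}

theorem existsUnique_lift_of_homeomorph (hp : HasUniqueCubeLifting p) {X : Type*}
    [TopologicalSpace X] {n : ℕ} (φ : X ≃ₜ (Fin n → I)) {x₀ : X}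
    (hx₀ : φ x₀ = fun _ => 0) (Ψ : C(X, B)) {e₀ : E} (he₀ : p e₀ = Ψ x₀) :
    ∃! U : C(X, E), U x₀ = e₀ ∧ ∀ x, p (U x) = Ψ x := by
  have hx₀' : φ.symm (fun _ => 0) = x₀ := φ.symm_apply_eq.2 hx₀.symm
  obtain ⟨U, ⟨hU₀, hUΨ⟩, hU⟩ :=
    hp n (Ψ.comp φ.symm) e₀ (by simpa [hx₀'] using he₀)
  refine ⟨U.comp φ, ⟨by simpa [hx₀] using hU₀, fun x => by simpa using hUΨ (φ x)⟩,
    ?_⟩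
  rintro V ⟨hV₀, hVΨ⟩
  have hV : V.comp φ.symm = U := hU _ ⟨by simpa [hx₀'] using hV₀, fun y => hVΨ _⟩
  ext x
  simpa using congr($hV (φ x))

theorem existsUnique_path_lift (hp : HasUniqueCubeLifting p) (γ : C(I, B)) {e : E}
    (he : p e = γ 0) : ∃! Γ : C(I, E), Γ 0 = e ∧ ∀ t, p (Γ t) = γ t :=
  hp.existsUnique_lift_of_homeomorph (Homeomorph.funUnique (Fin 1) I).symm rfl γ he

noncomputable def liftPath (hp : HasUniqueCubeLifting p) (γ : C(I, B)) (e : E)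
    (he : p e = γ 0) : C(I, E) :=
  (hp.existsUnique_path_lift γ he).exists.choose

theorem liftPath_zero (hp : HasUniqueCubeLifting p) (γ : C(I, B)) (e : E) (he : p e = γ 0) :
    hp.liftPath γ e he 0 = e :=
  (hp.existsUnique_path_lift γ he).exists.choose_spec.1

theorem liftPath_lifts (hp : HasUniqueCubeLifting p) (γ : C(I, B)) (e : E) (he : p e = γ 0)
    (t : I) : p (hp.liftPath γ e he t) = γ t :=
  (hp.existsUnique_path_lift γ he).exists.choose_spec.2 t

theorem eq_liftPath (hp : HasUniqueCubeLifting p) {γ : C(I, B)} {e : E} (he : p e = γ 0)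
    {Γ : C(I, E)} (hΓ₀ : Γ 0 = e) (hΓ : ∀ t, p (Γ t) = γ t) : Γ = hp.liftPath γ e he :=
  (hp.existsUnique_path_lift γ he).unique ⟨hΓ₀, hΓ⟩
    ⟨hp.liftPath_zero γ e he, hp.liftPath_lifts γ e he⟩

theorem apply_eq_of_lifts_const (hp : HasUniqueCubeLifting p) (Γ : C(I, E)) {b : B}
    (hΓ : ∀ t, p (Γ t) = b) (t : I) : Γ t = Γ 0 := by
  have hconst : const I (Γ 0) = Γ :=
    (hp.existsUnique_path_lift (const I b) (hΓ 0)).unique ⟨rfl, fun _ => hΓ 0⟩ ⟨rfl, hΓ⟩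
  exact congr($hconst t).symm

theorem apply_eq_of_joinedIn (hp : HasUniqueCubeLifting p) {X : Type*} [TopologicalSpace X]
    (U : C(X, E)) {S : Set X} {b : B} (hU : ∀ x ∈ S, p (U x) = b) {x y : X}
    (hxy : JoinedIn S x y) : U x = U y := by
  simpa using (hp.apply_eq_of_lifts_const (U.comp hxy.somePath.toContinuousMap)
    (fun t => hU _ (hxy.somePath_mem t)) 1).symm

theorem exists_genLoop_lift (hp : HasUniqueCubeLifting p) {k : ℕ} [Nontrivial (Fin k)]
    {b : B} (f : Ω^ (Fin k) B b) {e : E} (he : p e = b) :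
    ∃ U : Ω^ (Fin k) E e, ∀ y, p (U y) = f y := by
  obtain ⟨i⟩ : Nonempty (Fin k) := inferInstance
  obtain ⟨U, ⟨hU₀, hUf⟩, -⟩ :=
    hp k f e (he.trans (GenLoop.boundary f _ ⟨i, Or.inl rfl⟩).symm)
  refine ⟨⟨U, fun y hy => ?_⟩, hUf⟩
  rw [← hU₀]
  exact hp.apply_eq_of_joinedIn U (fun x hx => (hUf x).trans (GenLoop.boundary f x hx))
    (Cube.joinedIn_boundary_zero hy)

theorem subsingleton_homotopyGroup (hp : HasUniqueCubeLifting p) (hcont : Continuous p)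
    [ContractibleSpace E] {k : ℕ} [Nontrivial (Fin k)] {e : E} :
    Subsingleton (HomotopyGroup (Fin k) B (p e)) := by
  refine ⟨Quotient.ind₂ fun f g => Quotient.sound ?_⟩
  obtain ⟨U, hU⟩ := hp.exists_genLoop_lift f rfl
  obtain ⟨V, hV⟩ := hp.exists_genLoop_lift g rfl
  have hUf : (⟨p, hcont⟩ : C(E, B)).comp U = f.1 := ContinuousMap.ext hU
  have hVg : (⟨p, hcont⟩ : C(E, B)).comp V = g.1 := ContinuousMap.ext hV
  have hUV := (GenLoop.homotopic_of_contractibleSpace U V).comp_continuousMap ⟨p, hcont⟩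
  rwa [hUf, hVg] at hUV

theorem liftPath_one_eq_of_homotopic (hp : HasUniqueCubeLifting p) {b b' : B}
    {γ₀ γ₁ : Path b b'} (h : γ₀.Homotopic γ₁) {e : E} (he₀ : p e = γ₀ 0)
    (he₁ : p e = γ₁ 0) :
    hp.liftPath γ₀ e he₀ 1 = hp.liftPath γ₁ e he₁ 1 := by
  obtain ⟨F⟩ := h
  obtain ⟨K, ⟨hK₀, hKF⟩, -⟩ := hp.existsUnique_lift_of_homeomorph
    (Homeomorph.piFinTwo fun _ => I).symm (x₀ := (0, 0)) (by ext i; fin_cases i <;> rfl)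
    F.toContinuousMap (by simpa using he₀)
  let row (s : I) : C(I, E) := K.comp ((ContinuousMap.id I).prodMk (const I s))
  let column (t : I) : C(I, E) := K.comp ((const I t).prodMk (ContinuousMap.id I))
  have hrow₀ (t : I) : K (t, 0) = e :=
    (hp.apply_eq_of_lifts_const (row 0) (b := b) (fun t => by simp [row, hKF, F.source]) t).trans
      hK₀
  have hrow₁ : K (1, 1) = K (0, 1) :=
    hp.apply_eq_of_lifts_const (row 1) (b := b') (fun t => by simp [row, hKF, F.target]) 1
  have hcolumn₀ : column 0 = hp.liftPath γ₀ e he₀ :=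
    hp.eq_liftPath he₀ hK₀ (fun t => by simp [column, hKF])
  have hcolumn₁ : column 1 = hp.liftPath γ₁ e he₁ :=
    hp.eq_liftPath he₁ (hrow₀ 1) (fun t => by simp [column, hKF])
  rw [← hcolumn₀, ← hcolumn₁]
  exact hrow₁.symm

noncomputable def liftEndpoint (hp : HasUniqueCubeLifting p) {b b' : B} {e : E}
    (he : p e = b) : Path.Homotopic.Quotient b b' → p ⁻¹' {b'} :=
  Quotient.lift
    (fun γ : Path b b' =>
      ⟨hp.liftPath γ e (he.trans γ.source.symm) 1, by simp [liftPath_lifts]⟩)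
    fun _ _ h => Subtype.ext (hp.liftPath_one_eq_of_homotopic h _ _)

theorem injective_liftEndpoint (hp : HasUniqueCubeLifting p) (hcont : Continuous p)
    [SimplyConnectedSpace E] {b b' : B} {e : E} (he : p e = b) :
    Function.Injective (hp.liftEndpoint (b' := b') he) := by
  refine Quotient.ind₂ fun γ₀ γ₁ h => Quotient.sound ?_
  have he₀ : p e = γ₀ 0 := he.trans γ₀.source.symm
  have he₁ : p e = γ₁ 0 := he.trans γ₁.source.symm
  let l₀ := hp.liftPath γ₀ e he₀
  let l₁ := hp.liftPath γ₁ e he₁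
  let Γ₀ : Path e (l₀ 1) := ⟨l₀, hp.liftPath_zero .., rfl⟩
  let Γ₁ : Path e (l₀ 1) := ⟨l₁, hp.liftPath_zero .., congr_arg Subtype.val h.symm⟩
  have hΓ := ContinuousMap.HomotopicRel.comp_continuousMap
    (SimplyConnectedSpace.paths_homotopic Γ₀ Γ₁) ⟨p, hcont⟩
  have hΓ₀ : (⟨p, hcont⟩ : C(E, B)).comp Γ₀.toContinuousMap = γ₀.toContinuousMap :=
    ContinuousMap.ext (hp.liftPath_lifts _ _ he₀)
  have hΓ₁ : (⟨p, hcont⟩ : C(E, B)).comp Γ₁.toContinuousMap = γ₁.toContinuousMap :=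
    ContinuousMap.ext (hp.liftPath_lifts _ _ he₁)
  rwa [hΓ₀, hΓ₁] at hΓ

theorem surjective_liftEndpoint (hp : HasUniqueCubeLifting p) (hcont : Continuous p)
    [PathConnectedSpace E] {b b' : B} {e : E} (he : p e = b) :
    Function.Surjective (hp.liftEndpoint (b' := b') he) := by
  rintro ⟨e', he'⟩
  let Γ := PathConnectedSpace.somePath e e'
  let γ : Path b b' := (Γ.map hcont).cast he.symm he'.symm
  refine ⟨Path.Homotopic.Quotient.mk γ, Subtype.ext ?_⟩
  show hp.liftPath γ e _ 1 = e'
  rw [← hp.eq_liftPath _ Γ.source fun t => rfl]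
  exact Γ.target

end HasUniqueCubeLifting

end

theorem stmt_11_general {E B : Type*} [TopologicalSpace E] [TopologicalSpace B]
    (p : E → B) (hcont : Continuous p) (hsurj : Function.Surjective p)
    (htwo : ∀ b : B, Nat.card (p ⁻¹' {b}) = 2)
    [ContractibleSpace E]
    (hlift : ∀ (n : ℕ) (Ψ : C((Fin n → unitInterval), B)) (e0 : E),
      p e0 = Ψ (fun _ => 0) →
      ∃! U : C((Fin n → unitInterval), E),
        U (fun _ => 0) = e0 ∧ ∀ x, p (U x) = Ψ x)
    (b0 : B) :
    (∀ k : ℕ, 2 ≤ k → Subsingleton (HomotopyGroup (Fin k) B b0)) ∧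
      Nat.card (FundamentalGroup B b0) = 2 := by
  have hp : HasUniqueCubeLifting p := hlift
  obtain ⟨e₀, rfl⟩ := hsurj b0
  refine ⟨fun k hk => ?_, ?_⟩
  · have : Nontrivial (Fin k) := Fin.nontrivial_iff_two_le.2 hk
    exact hp.subsingleton_homotopyGroup hcont
  · rw [← htwo]
    exact Nat.card_eq_of_bijective (hp.liftEndpoint rfl)
      ⟨hp.injective_liftEndpoint hcont rfl, hp.surjective_liftEndpoint hcont rfl⟩

/-- Let `p : E → B` be a continuous surjection with the unique lifting
property for maps from cubes: every continuous `Ψ : [0,1]^n → B` with a prescribed lift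
`e0` of `Ψ(0)` admits a unique continuous lift `U : [0,1]^n → E` with `U(0) = e0` and
`p ∘ U = Ψ`.  If moreover `E` is contractible and every fiber of `p` has exactly two
points, then for every basepoint `b0` of the path-connected space `B` we have
`π_k(B, b0) = 0` for all `k ≥ 2`, and `π₁(B, b0)` has exactly two elements. -/
theorem stmt_11 {E B : Type*} [TopologicalSpace E] [TopologicalSpace B]
    (p : E → B) (hcont : Continuous p) (hsurj : Function.Surjective p)
    (htwo : ∀ b : B, Nat.card (p ⁻¹' {b}) = 2)
    [ContractibleSpace E] [PathConnectedSpace B]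
    (hlift : ∀ (n : ℕ) (Ψ : C((Fin n → unitInterval), B)) (e0 : E),
      p e0 = Ψ (fun _ => 0) →
      ∃! U : C((Fin n → unitInterval), E),
        U (fun _ => 0) = e0 ∧ ∀ x, p (U x) = Ψ x)
    (b0 : B) :
    (∀ k : ℕ, 2 ≤ k → Subsingleton (HomotopyGroup (Fin k) B b0)) ∧
      Nat.card (FundamentalGroup B b0) = 2 :=
  stmt_11_general p hcont hsurj htwo hlift b0
end

section
/- Let H : [0,1] × Z → Z be a continuous map on a topological space Z and Φ*_i : X → Z continuous maps on a compact space X, with Φ_i(x) := H(1, Φ*_i(x)). Suppose: (a) H(t, z) = z for all t whenever z lies in a closed subset S ⊂ Z ('stationary points'); (b) a functional M : Z → R is continuous, M(H(1,z)) < M(z) whenever z ∉ S, and M(H(1,z)) ≤ M(z) always. If z is a limit point of a sequence (Φ_{i_j}(x_j)) with M(Φ_{i_j}(x_j)) → L = limsup_i sup_x M(Φ_i(x)) = limsup_i sup_x M(Φ*_i(x)), then z ∈ S. -/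
/-!
Pass to a subsequence along which the untightened points `Φ*_{i_j}(x_j)` converge to some `p`.
Then `H(1, p) = z`, and `M p ≤ L = M z` because `L` is also the limsup of the untightened
maxima. Since `H(1, ·)` strictly lowers `M` off `S`, this forces `p ∈ S`, where `H(1, ·)` is the
identity, so `z = p ∈ S`.
-/

open Filter Topology Set

theorem eventually_forall_lt_of_limsup_iSup_lt {X : Type*} [Nonempty X] {u : ℕ → X → ℝ}
    {C b : ℝ} (hC : ∀ i x, u i x ≤ C) (hb : limsup (fun i => ⨆ x, u i x) atTop < b) :
    ∀ᶠ i in atTop, ∀ x, u i x < b := by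
  have hbdd : IsBoundedUnder (· ≤ ·) atTop fun i => ⨆ x, u i x :=
    isBoundedUnder_of ⟨C, fun i => ciSup_le (hC i)⟩
  filter_upwards [eventually_lt_of_limsup_lt hb hbdd] with i hi x
  exact (le_ciSup ⟨C, forall_mem_range.2 (hC i)⟩ x).trans_lt hi

section PullTight

variable {Z : Type*} [TopologicalSpace Z] [T2Space Z] [SeqCompactSpace Z]
  {f : Z → Z} {M : Z → ℝ} {S : Set Z}

theorem mem_of_tendsto_apply_of_eventually_lt (hf : Continuous f) (hM : Continuous M)
    (hfix : ∀ z ∈ S, f z = z) (hdec : ∀ z ∉ S, M (f z) < M z) {w : ℕ → Z} {z : Z}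
    (hz : Tendsto (f ∘ w) atTop (𝓝 z)) (hw : ∀ b, M z < b → ∀ᶠ j in atTop, M (w j) < b) :
    z ∈ S := by
  obtain ⟨p, φ, hφ, hwp⟩ := SeqCompactSpace.tendsto_subseq w
  have hfp : f p = z :=
    tendsto_nhds_unique ((hf.tendsto p).comp hwp) (hz.comp hφ.tendsto_atTop)
  have hMp : M p ≤ M z := le_of_forall_gt_imp_ge_of_dense fun b hb =>
    le_of_tendsto ((hM.tendsto p).comp hwp)
      ((hφ.tendsto_atTop.eventually (hw b hb)).mono fun _ h => h.le)
  have hpS : p ∈ S := by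
    by_contra hp
    exact (hdec p hp).not_ge (hfp ▸ hMp)
  rwa [← hfp, hfix p hpS]

end PullTight

theorem stmt_14_general {Z : Type*} [MetricSpace Z] [CompactSpace Z]
    {X : Type*} [TopologicalSpace X]
    (H : unitInterval → Z → Z)
    (hHcont : Continuous fun q : unitInterval × Z => H q.1 q.2)
    (S : Set Z)
    (M : Z → ℝ) (hM : Continuous M)
    (ha : ∀ (t : unitInterval) (z : Z), z ∈ S → H t z = z)
    (hb1 : ∀ z : Z, z ∉ S → M (H 1 z) < M z)
    (Φs : ℕ → C(X, Z)) (L : ℝ)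
    (hL2 : Filter.limsup (fun i => ⨆ x : X, M (Φs i x)) Filter.atTop = L)
    (ij : ℕ → ℕ) (hij : StrictMono ij) (xj : ℕ → X) (z : Z)
    (hz : Filter.Tendsto (fun j => H 1 (Φs (ij j) (xj j))) Filter.atTop (nhds z))
    (hML : Filter.Tendsto (fun j => M (H 1 (Φs (ij j) (xj j)))) Filter.atTop (nhds L)) :
    z ∈ S := by
  have : Nonempty X := ⟨xj 0⟩
  have hH1 : Continuous (H 1) := hHcont.comp (Continuous.prodMk_right 1)
  have hMz : M z = L := tendsto_nhds_unique ((hM.tendsto z).comp hz) hML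
  obtain ⟨C, hC⟩ := (isCompact_range hM).bddAbove
  refine mem_of_tendsto_apply_of_eventually_lt hH1 hM (ha 1) hb1 hz fun b hb => ?_
  have hlt : limsup (fun i => ⨆ x, M (Φs i x)) atTop < b := hL2 ▸ hMz ▸ hb
  exact (hij.tendsto_atTop.eventually
    (eventually_forall_lt_of_limsup_iSup_lt (fun i x => hC (mem_range_self _)) hlt)).mono
      fun j hj => hj (xj j)

/-- **pull-tight.** Let `H : [0,1] × Z → Z` be continuous on a (compact)
metric space `Z`, `S ⊆ Z` a closed set of "stationary points" with `H(t,z) = z` for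
`z ∈ S`, and `M : Z → ℝ` continuous with `M(H(1,z)) ≤ M(z)` always and
`M(H(1,z)) < M(z)` for `z ∉ S`.  Let `Φ*_i : X → Z` be continuous maps on a compact
space `X` and `Φ_i := H(1, ·) ∘ Φ*_i`, and suppose
`L = limsup_i sup_x M(Φ_i(x)) = limsup_i sup_x M(Φ*_i(x))`.  If `z` is the limit of a
sequence `Φ_{i_j}(x_j)` with `M(Φ_{i_j}(x_j)) → L`, then `z ∈ S`. -/
theorem stmt_14 {Z : Type*} [MetricSpace Z] [CompactSpace Z]
    {X : Type*} [TopologicalSpace X] [CompactSpace X]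
    (H : unitInterval → Z → Z)
    (hHcont : Continuous fun q : unitInterval × Z => H q.1 q.2)
    (S : Set Z) (hS : IsClosed S)
    (M : Z → ℝ) (hM : Continuous M)
    (ha : ∀ (t : unitInterval) (z : Z), z ∈ S → H t z = z)
    (hb1 : ∀ z : Z, z ∉ S → M (H 1 z) < M z)
    (hb2 : ∀ z : Z, M (H 1 z) ≤ M z)
    (Φs : ℕ → C(X, Z)) (L : ℝ)
    (hL1 : Filter.limsup (fun i => ⨆ x : X, M (H 1 (Φs i x))) Filter.atTop = L)
    (hL2 : Filter.limsup (fun i => ⨆ x : X, M (Φs i x)) Filter.atTop = L)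
    (ij : ℕ → ℕ) (hij : StrictMono ij) (xj : ℕ → X) (z : Z)
    (hz : Filter.Tendsto (fun j => H 1 (Φs (ij j) (xj j))) Filter.atTop (nhds z))
    (hML : Filter.Tendsto (fun j => M (H 1 (Φs (ij j) (xj j)))) Filter.atTop (nhds L)) :
    z ∈ S :=
  stmt_14_general H hHcont S M hM ha hb1 Φs L hL2 ij hij xj z hz hML
end

section
/- Let (G, +) be an abelian group with a 'mass' norm M and 'flat' functional F satisfying F(T) ≤ M(T), and suppose there are constants ε, ν > 0 such that every T with F(T) < ε admits a unique Q in a filling set with ∂Q = T and M(Q) ≤ ν F(T). Then for every continuous path Ψ : [0,1] → {cycles} (continuous in F) and every filling U_0 of Ψ(0), there is a unique continuous lift U : [0,1] → {fillings} with ∂U(t) = Ψ(t) and U(0) = U_0; it is constructed by subdividing [0,1] into intervals on which consecutive values of Ψ are F-distance less than ε apart and adding the small fillings of the differences. -/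
/-!
A nonzero filling of the zero cycle has mass at least `γ > 2νε`, so two fillings of the same
cycle whose difference has mass `< γ` coincide. Consequently the small-filling map `q` is
additive, hence `ν`-Lipschitz, on the flat ball of radius `ε / 2`, and `ker ∂` is discrete in
mass.

Existence: cut `[0, 1]` into `N` intervals on which `Ψ` moves by less than `ε / 2` and put
`U t = U0 + ∑ j, q (Ψ (min t ((j + 1) / N)) - Ψ (min t (j / N)))`. Its boundary telescopes to
`Ψ t`, and every summand is continuous. Uniqueness: the difference of two continuous lifts is
a continuous map from the connected interval into the discrete group `ker ∂`, hence constant.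
-/

open Set Metric Finset

section SmallFillings

variable {W G : Type*} [SeminormedAddCommGroup W] [SeminormedAddCommGroup G]

structure IsSmallFilling (bd : W →+ G) (ε ν : ℝ) (q : G → W) : Prop where
  map_apply : ∀ T, ‖T‖ < ε → bd (q T) = T
  norm_le : ∀ T, ‖T‖ < ε → ‖q T‖ ≤ ν * ‖T‖

def HasMassGap (bd : W →+ G) (γ : ℝ) : Prop :=
  ∀ Q, bd Q = 0 → Q ≠ 0 → γ ≤ ‖Q‖

variable {bd : W →+ G} {γ : ℝ}

namespace HasMassGap

theorem eq_of_map_eq (hgap : HasMassGap bd γ) {x y : W} (h : bd x = bd y) (hxy : ‖x - y‖ < γ) : x = y := by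
  by_contra hne
  exact (hgap (x - y) (by rw [map_sub, h, sub_self]) (sub_ne_zero.2 hne)).not_gt hxy

theorem discreteTopology_ker (hgap : HasMassGap bd γ) (hγ : 0 < γ) :
    DiscreteTopology bd.ker :=
  .of_forall_le_norm hγ fun Q hQ => hgap Q Q.2 (by simpa using hQ)

theorem eqOn_of_continuousOn (hgap : HasMassGap bd γ) (hγ : 0 < γ) {X : Type*}
    [TopologicalSpace X] {s : Set X} (hs : IsPreconnected s)
    {U U' : X → W} (hU : ContinuousOn U s) (hU' : ContinuousOn U' s)
    (hbd : ∀ t ∈ s, bd (U t) = bd (U' t)) {x : X} (hx : x ∈ s) (hUx : U x = U' x) :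
    EqOn U U' s := by
  have hdisc : IsDiscrete (bd.ker : Set W) :=
    isDiscrete_iff_discreteTopology.2 (hgap.discreteTopology_ker hγ)
  have hker : MapsTo (U - U') s bd.ker := fun t ht => by
    simp [AddMonoidHom.mem_ker, hbd t ht]
  intro t ht
  have := hs.constant_of_mapsTo hdisc (hU.sub hU') hker ht hx
  simpa [hUx, sub_eq_zero] using this

end HasMassGap

namespace IsSmallFilling

variable {ε ν : ℝ} {q : G → W}

theorem apply_zero (hq : IsSmallFilling bd ε ν q) (hε : 0 < ε) (hγ : 0 < γ)
    (hgap : HasMassGap bd γ) : q 0 = 0 := by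
  have h0 : ‖(0 : G)‖ < ε := by simpa using hε
  refine hgap.eq_of_map_eq (by rw [hq.map_apply 0 h0, map_zero]) ?_
  simpa using (hq.norm_le 0 h0).trans_lt (by simpa using hγ)

theorem apply_sub (hq : IsSmallFilling bd ε ν q) (hν : 0 ≤ ν)
    (hgap : HasMassGap bd γ) (hsmall : 2 * ν * ε < γ) {T T' : G}
    (hT : ‖T‖ < ε / 2) (hT' : ‖T'‖ < ε / 2) : q (T - T') = q T - q T' := by
  have hTε : ‖T‖ < ε := by linarith [norm_nonneg T]
  have hT'ε : ‖T'‖ < ε := by linarith [norm_nonneg T']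
  have hTT' : ‖T - T'‖ < ε := (norm_sub_le T T').trans_lt (by linarith)
  refine hgap.eq_of_map_eq ?_ ?_
  · rw [map_sub, hq.map_apply T hTε, hq.map_apply T' hT'ε, hq.map_apply _ hTT']
  · calc ‖q (T - T') - (q T - q T')‖ ≤ ‖q (T - T')‖ + (‖q T‖ + ‖q T'‖) :=
          (norm_sub_le _ _).trans (by gcongr; exact norm_sub_le _ _)
      _ ≤ ν * ε + (ν * (ε / 2) + ν * (ε / 2)) := by
          gcongr
          · exact (hq.norm_le _ hTT').trans (by gcongr)
          · exact (hq.norm_le T hTε).trans (by gcongr)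
          · exact (hq.norm_le T' hT'ε).trans (by gcongr)
      _ < γ := by linarith

theorem lipschitzOnWith (hq : IsSmallFilling bd ε ν q) (hν : 0 ≤ ν)
    (hgap : HasMassGap bd γ) (hsmall : 2 * ν * ε < γ) :
    LipschitzOnWith ν.toNNReal q (ball 0 (ε / 2)) := by
  refine .of_dist_le_mul fun T hT T' hT' => ?_
  rw [mem_ball_zero_iff] at hT hT'
  rw [dist_eq_norm, dist_eq_norm, ← hq.apply_sub hν hgap hsmall hT hT', Real.coe_toNNReal ν hν]
  exact hq.norm_le _ ((norm_sub_le T T').trans_lt (by linarith))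

end IsSmallFilling

end SmallFillings

noncomputable section PathLifting

variable {W G : Type*} [SeminormedAddCommGroup W] [SeminormedAddCommGroup G]

theorem continuousOn_iff_norm_sub_lt {f : ℝ → G} {s : Set ℝ} :
    ContinuousOn f s ↔ ∀ t ∈ s, ∀ ε > (0 : ℝ), ∃ δ > (0 : ℝ),
      ∀ x ∈ s, |x - t| < δ → ‖f x - f t‖ < ε := by
  simp only [Metric.continuousOn_iff, dist_eq_norm, Real.norm_eq_abs]

def stepIncrement (Ψ : ℝ → G) (N j : ℕ) (t : ℝ) : G :=
  Ψ (min t ((j + 1) / N)) - Ψ (min t (j / N))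

def stepLift (q : G → W) (Ψ : ℝ → G) (U0 : W) (N : ℕ) (t : ℝ) : W :=
  U0 + ∑ j ∈ range N, q (stepIncrement Ψ N j t)

theorem min_mem_unitInterval {t b : ℝ} (ht : t ∈ Icc (0 : ℝ) 1) (hb : 0 ≤ b) :
    min t b ∈ Icc (0 : ℝ) 1 :=
  ⟨le_min ht.1 hb, (min_le_left t b).trans ht.2⟩

theorem stepIncrement_zero (Ψ : ℝ → G) (N j : ℕ) : stepIncrement Ψ N j 0 = 0 := by
  simp only [stepIncrement, min_eq_left (by positivity : (0 : ℝ) ≤ (j + 1) / N),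
    min_eq_left (by positivity : (0 : ℝ) ≤ j / N), sub_self]

theorem sum_stepIncrement (Ψ : ℝ → G) {N : ℕ} (hN : N ≠ 0) {t : ℝ} (ht : t ∈ Icc (0 : ℝ) 1) :
    ∑ j ∈ range N, stepIncrement Ψ N j t = Ψ t - Ψ 0 := by
  have h := Finset.sum_range_sub (fun j : ℕ => Ψ (min t (j / N))) N
  push_cast at h
  simp only [stepIncrement]
  rw [h, div_self (Nat.cast_ne_zero.2 hN), zero_div, min_eq_left ht.2, min_eq_right ht.1]

theorem continuousOn_stepIncrement {Ψ : ℝ → G} (hΨ : ContinuousOn Ψ (Icc 0 1)) (N j : ℕ) :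
    ContinuousOn (stepIncrement Ψ N j) (Icc 0 1) := by
  refine (hΨ.comp (continuous_id.min continuous_const).continuousOn fun t ht => ?_).sub
    (hΨ.comp (continuous_id.min continuous_const).continuousOn fun t ht => ?_)
  · exact min_mem_unitInterval ht (by positivity)
  · exact min_mem_unitInterval ht (by positivity)

theorem norm_stepIncrement_lt {Ψ : ℝ → G} {δ r : ℝ}
    (hΨ : ∀ x ∈ Icc (0 : ℝ) 1, ∀ y ∈ Icc (0 : ℝ) 1, dist x y < δ → dist (Ψ x) (Ψ y) < r)
    {N : ℕ} (hN : 1 / (N : ℝ) < δ) (j : ℕ) {t : ℝ} (ht : t ∈ Icc (0 : ℝ) 1) :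
    ‖stepIncrement Ψ N j t‖ < r := by
  rw [stepIncrement, ← dist_eq_norm]
  refine hΨ _ (min_mem_unitInterval ht (by positivity)) _
    (min_mem_unitInterval ht (by positivity)) (lt_of_le_of_lt ?_ hN)
  calc dist (min t ((j + 1) / N)) (min t (j / N))
      ≤ max |t - t| |(j + 1) / N - j / N| := abs_min_sub_min_le_max _ _ _ _
    _ ≤ 1 / N := by rw [sub_self, abs_zero, ← sub_div, add_sub_cancel_left]; simp

variable {bd : W →+ G} {ε ν γ : ℝ} {q : G → W}

theorem exists_continuousOn_lift (hq : IsSmallFilling bd ε ν q) (hε : 0 < ε) (hν : 0 ≤ ν)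
    (hgap : HasMassGap bd γ) (hsmall : 2 * ν * ε < γ) {Ψ : ℝ → G}
    (hΨ : ContinuousOn Ψ (Icc 0 1)) {U0 : W} (hU0 : bd U0 = Ψ 0) :
    ∃ U : ℝ → W, U 0 = U0 ∧ (∀ t ∈ Icc (0 : ℝ) 1, bd (U t) = Ψ t) ∧
      ContinuousOn U (Icc 0 1) := by
  have hγ : 0 < γ := lt_of_le_of_lt (by positivity) hsmall
  obtain ⟨δ, hδ, hΨδ⟩ := Metric.uniformContinuousOn_iff.1
    (isCompact_Icc.uniformContinuousOn_of_continuous hΨ) (ε / 2) (half_pos hε)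
  obtain ⟨n, hn⟩ := exists_nat_one_div_lt hδ
  have hinc : ∀ j, MapsTo (stepIncrement Ψ (n + 1) j) (Icc 0 1) (ball 0 (ε / 2)) :=
    fun j t ht => mem_ball_zero_iff.2 (norm_stepIncrement_lt hΨδ (by exact_mod_cast hn) j ht)
  refine ⟨stepLift q Ψ U0 (n + 1), ?_, fun t ht => ?_, ?_⟩
  · simp [stepLift, stepIncrement_zero, hq.apply_zero hε hγ hgap]
  · have hfill : ∀ j ∈ range (n + 1), bd (q (stepIncrement Ψ (n + 1) j t)) =
        stepIncrement Ψ (n + 1) j t := fun j _ =>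
      hq.map_apply _ ((mem_ball_zero_iff.1 (hinc j ht)).trans (half_lt_self hε))
    rw [stepLift, map_add, map_sum, sum_congr rfl hfill, sum_stepIncrement Ψ n.succ_ne_zero ht,
      hU0, add_sub_cancel]
  · exact continuousOn_const.add (continuousOn_finsetSum _ fun j _ =>
      (hq.lipschitzOnWith hν hgap hsmall).continuousOn.comp (continuousOn_stepIncrement hΨ _ j)
        (hinc j))

end PathLifting

theorem stmt_16_general {W G : Type*} [AddCommGroup W] [AddCommGroup G]
    (bd : W →+ G) (MW : W → ℝ) (FG : G → ℝ)
    (hMW0 : MW 0 = 0)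
    (hMWadd : ∀ x y, MW (x + y) ≤ MW x + MW y) (hMWneg : ∀ x, MW (-x) = MW x)
    (hF0 : FG 0 = 0)
    (hFadd : ∀ S T, FG (S + T) ≤ FG S + FG T) (hFneg : ∀ T, FG (-T) = FG T)
    (ε ν γ : ℝ) (hε : 0 < ε) (hν : 0 < ν) (hγ : 0 < γ)
    (hfill : ∀ T : G, FG T < ε → ∃! Q : W, bd Q = T ∧ MW Q ≤ ν * FG T)
    (hgap : ∀ Q : W, bd Q = 0 → Q ≠ 0 → γ ≤ MW Q)
    (hsmall : 4 * ν * ε < γ)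
    (Ψ : ℝ → G)
    (hΨ : ∀ t ∈ Set.Icc (0 : ℝ) 1, ∀ ε' > (0 : ℝ), ∃ δ > (0 : ℝ),
      ∀ s ∈ Set.Icc (0 : ℝ) 1, |s - t| < δ → FG (Ψ s - Ψ t) < ε')
    (U0 : W) (hU0 : bd U0 = Ψ 0) :
    ∃ U : ℝ → W, U 0 = U0 ∧ (∀ t ∈ Set.Icc (0 : ℝ) 1, bd (U t) = Ψ t) ∧
      (∀ t ∈ Set.Icc (0 : ℝ) 1, ∀ ε' > (0 : ℝ), ∃ δ > (0 : ℝ),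
        ∀ s ∈ Set.Icc (0 : ℝ) 1, |s - t| < δ → MW (U s - U t) < ε') ∧
      ∀ U' : ℝ → W, U' 0 = U0 → (∀ t ∈ Set.Icc (0 : ℝ) 1, bd (U' t) = Ψ t) →
        (∀ t ∈ Set.Icc (0 : ℝ) 1, ∀ ε' > (0 : ℝ), ∃ δ > (0 : ℝ),
          ∀ s ∈ Set.Icc (0 : ℝ) 1, |s - t| < δ → MW (U' s - U' t) < ε') →
        ∀ t ∈ Set.Icc (0 : ℝ) 1, U' t = U t := by
  let : SeminormedAddCommGroup W := AddGroupSeminorm.toSeminormedAddCommGroup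
    { toFun := MW, map_zero' := hMW0, add_le' := hMWadd, neg' := hMWneg }
  let : SeminormedAddCommGroup G := AddGroupSeminorm.toSeminormedAddCommGroup
    { toFun := FG, map_zero' := hF0, add_le' := hFadd, neg' := hFneg }
  choose! q hqT using fun T hT => (hfill T hT).exists
  have hq : IsSmallFilling bd ε ν q := ⟨fun T hT => (hqT T hT).1, fun T hT => (hqT T hT).2⟩
  obtain ⟨U, hU_zero, hbdU, hU⟩ := exists_continuousOn_lift hq hε hν.le hgap
    (by nlinarith) (continuousOn_iff_norm_sub_lt.2 hΨ) hU0
  refine ⟨U, hU_zero, hbdU, continuousOn_iff_norm_sub_lt.1 hU, fun U' hU'0 hbdU' hU' => ?_⟩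
  exact HasMassGap.eqOn_of_continuousOn hgap hγ isPreconnected_Icc
    (continuousOn_iff_norm_sub_lt.2 hU') hU (fun t ht => (hbdU' t ht).trans (hbdU t ht).symm)
    (left_mem_Icc.2 zero_le_one) (hU'0.trans hU_zero.symm)

/-- Let `G` be an abelian group of "cycles" with mass norm `M_G` and flat
functional `F` with `F(T) ≤ M_G(T)`, and let `∂ : W → G` be a boundary map from a group of
"fillings" with mass `M_W`, such that every `T` with `F(T) < ε` admits a unique filling
`Q` with `∂Q = T` and `M_W(Q) ≤ ν F(T)` (Federer–Fleming isoperimetric inequality plus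
the Constancy Theorem, which also gives the mass gap `γ` for nonzero elements of
`ker ∂`).  Then every path `Ψ : [0,1] → G` continuous in `F`, together with a filling
`U0` of `Ψ(0)`, admits a lift `U : [0,1] → W` with `∂U(t) = Ψ(t)`, `U(0) = U0`,
continuous in the mass `M_W`; and such a continuous lift is unique.  (It is constructed by
subdividing `[0,1]` into intervals on which consecutive values of `Ψ` are `F`-distance
less than `ε` apart and adding the small fillings of the differences.) -/
theorem stmt_16 {W G : Type*} [AddCommGroup W] [AddCommGroup G]
    (bd : W →+ G) (MW : W → ℝ) (MG FG : G → ℝ)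
    (hMW0 : MW 0 = 0) (hMWnn : ∀ x, 0 ≤ MW x)
    (hMWadd : ∀ x y, MW (x + y) ≤ MW x + MW y) (hMWneg : ∀ x, MW (-x) = MW x)
    (hFnn : ∀ T, 0 ≤ FG T) (hF0 : FG 0 = 0)
    (hFadd : ∀ S T, FG (S + T) ≤ FG S + FG T) (hFneg : ∀ T, FG (-T) = FG T)
    (hFM : ∀ T, FG T ≤ MG T)
    (ε ν γ : ℝ) (hε : 0 < ε) (hν : 0 < ν) (hγ : 0 < γ)
    (hfill : ∀ T : G, FG T < ε → ∃! Q : W, bd Q = T ∧ MW Q ≤ ν * FG T)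
    (hgap : ∀ Q : W, bd Q = 0 → Q ≠ 0 → γ ≤ MW Q)
    (hsmall : 4 * ν * ε < γ)
    (Ψ : ℝ → G)
    (hΨ : ∀ t ∈ Set.Icc (0 : ℝ) 1, ∀ ε' > (0 : ℝ), ∃ δ > (0 : ℝ),
      ∀ s ∈ Set.Icc (0 : ℝ) 1, |s - t| < δ → FG (Ψ s - Ψ t) < ε')
    (U0 : W) (hU0 : bd U0 = Ψ 0) :
    ∃ U : ℝ → W, U 0 = U0 ∧ (∀ t ∈ Set.Icc (0 : ℝ) 1, bd (U t) = Ψ t) ∧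
      (∀ t ∈ Set.Icc (0 : ℝ) 1, ∀ ε' > (0 : ℝ), ∃ δ > (0 : ℝ),
        ∀ s ∈ Set.Icc (0 : ℝ) 1, |s - t| < δ → MW (U s - U t) < ε') ∧
      ∀ U' : ℝ → W, U' 0 = U0 → (∀ t ∈ Set.Icc (0 : ℝ) 1, bd (U' t) = Ψ t) →
        (∀ t ∈ Set.Icc (0 : ℝ) 1, ∀ ε' > (0 : ℝ), ∃ δ > (0 : ℝ),
          ∀ s ∈ Set.Icc (0 : ℝ) 1, |s - t| < δ → MW (U' s - U' t) < ε') →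
        ∀ t ∈ Set.Icc (0 : ℝ) 1, U' t = U t :=
  stmt_16_general bd MW FG hMW0 hMWadd hMWneg hF0 hFadd hFneg ε ν γ hε hν hγ hfill hgap hsmall Ψ hΨ
    U0 hU0
end
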